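/- Substitution lemma: if π₁ = Δ, x:τ ⊢ M : α and π₂ = Γ ⊢ V : τ are derivable (V a value), then there is a derivation π₃ = Δ⊗Γ ⊢ M[V/x] : α with |π₃| = |π₁| + |π₂|. -/

import Mathlib

-- Computational and parallel types
mutual
  inductive CTy : Type
    | one : CTy
    | tens : CTy → CTy → CTy
    | arr : CTy → PTy → CTy
  inductive PTy : Type
    | ofC : CTy → PTy
    | par : PTy → PTy → PTy
end

-- Type equivalence: AC of ⊗ and ⅋, 1 neutral for ⊗
mutual
  inductive CEq : CTy → CTy → Prop
    | refl (τ) : CEq τ τ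
    | symm : CEq τ ρ → CEq ρ τ
    | trans : CEq τ ρ → CEq ρ σ → CEq τ σ
    | comm (τ ρ) : CEq (.tens τ ρ) (.tens ρ τ)
    | assoc (τ ρ σ) : CEq (.tens (.tens τ ρ) σ) (.tens τ (.tens ρ σ))
    | unit (τ) : CEq (.tens τ .one) τ
    | tensCongr : CEq τ τ' → CEq ρ ρ' → CEq (.tens τ ρ) (.tens τ' ρ')
    | arrCongr : CEq τ τ' → PEq α α' → CEq (.arr τ α) (.arr τ' α')
  inductive PEq : PTy → PTy → Prop
    | refl (α) : PEq α α
    | symm : PEq α β → PEq β α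
    | trans : PEq α β → PEq β γ → PEq α γ
    | comm (α β) : PEq (.par α β) (.par β α)
    | assoc (α β γ) : PEq (.par (.par α β) γ) (.par α (.par β γ))
    | parCongr : PEq α α' → PEq β β' → PEq (.par α β) (.par α' β')
    | ofC : CEq τ τ' → PEq (.ofC τ) (.ofC τ')
end

def Ctx : Type := ℕ → CTy
def Ctx.empty : Ctx := fun _ => CTy.one
def Ctx.tens (Γ Δ : Ctx) : Ctx := fun n => CTy.tens (Γ n) (Δ n)
def Ctx.single (x : ℕ) (τ : CTy) : Ctx := fun n => if n = x then τ else CTy.one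
def Ctx.cons (τ : CTy) (Γ : Ctx) : Ctx := fun n =>
  match n with
  | 0 => τ
  | n+1 => Γ n
def CtxEq (Γ Δ : Ctx) : Prop := ∀ n, CEq (Γ n) (Δ n)

def tensList (l : List CTy) : CTy := l.foldr CTy.tens CTy.one
def tensFin (n : ℕ) (f : Fin n → CTy) : CTy := tensList (List.ofFn f)
def tensCtxFin (n : ℕ) (Δ : Fin n → Ctx) : Ctx := fun x => tensFin n (fun i => Δ i x)

def parList : List PTy → PTy
  | [] => PTy.ofC CTy.one
  | [α] => α
  | α :: β :: rest => PTy.par α (parList (β :: rest))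

def parFin (n : ℕ) (f : Fin n → PTy) : PTy := parList (List.ofFn f)

/-- ⅋ᵏ1 : the par of k copies of 1 (left associated); junk value at 0. -/
def parOnes : ℕ → PTy
  | 0 => PTy.ofC CTy.one
  | 1 => PTy.ofC CTy.one
  | n+2 => PTy.par (parOnes (n+1)) (PTy.ofC CTy.one)

/-- Terms of Λ₊∥ in de Bruijn notation. -/
inductive Tm : Type
  | var : ℕ → Tm
  | lam : Tm → Tm
  | app : Tm → Tm → Tm
  | plus : Tm → Tm → Tm
  | par : Tm → Tm → Tm

def IsValue : Tm → Prop
  | .var _ => True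
  | .lam _ => True
  | _ => False

def IsPar : Tm → Prop
  | .par _ _ => True
  | _ => False

def shiftTm (c : ℕ) : Tm → Tm
  | .var n => if n < c then .var n else .var (n+1)
  | .lam M => .lam (shiftTm (c+1) M)
  | .app M N => .app (shiftTm c M) (shiftTm c N)
  | .plus M N => .plus (shiftTm c M) (shiftTm c N)
  | .par M N => .par (shiftTm c M) (shiftTm c N)

/-- Capture-avoiding substitution `M[V/k]` (de Bruijn). -/
def substTm : Tm → ℕ → Tm → Tm
  | .var n, k, V => if n = k then V else if k < n then .var (n-1) else .var n
  | .lam M, k, V => .lam (substTm M (k+1) (shiftTm 0 V))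
  | .app M N, k, V => .app (substTm M k V) (substTm N k V)
  | .plus M N, k, V => .plus (substTm M k V) (substTm N k V)
  | .par M N, k, V => .par (substTm M k V) (substTm N k V)

def closedUnder : ℕ → Tm → Prop
  | d, .var n => n < d
  | d, .lam M => closedUnder (d+1) M
  | d, .app M N => closedUnder d M ∧ closedUnder d N
  | d, .plus M N => closedUnder d M ∧ closedUnder d N
  | d, .par M N => closedUnder d M ∧ closedUnder d N

def Closed (M : Tm) : Prop := closedUnder 0 M

/-- One-step reduction; the boolean flag records whether a +-reduction is used. -/
inductive Step : Bool → Tm → Tm → Prop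
  | beta {M V} : IsValue V → Step false (.app (.lam M) V) (substTm M 0 V)
  | plusL (M N) : Step true (.plus M N) M
  | plusR (M N) : Step true (.plus M N) N
  | parAppL (M N P) : Step false (.app (.par M N) P) (.par (.app M P) (.app N P))
  | parAppR {V} (M N) : IsValue V → Step false (.app V (.par M N)) (.par (.app V M) (.app V N))
  | parL {b M M'} (N) : Step b M M' → Step b (.par M N) (.par M' N)
  | parR {b N N'} (M) : Step b N N' → Step b (.par M N) (.par M N')
  | appL {b M M'} (N) : Step b M M' → ¬ IsPar M → Step b (.app M N) (.app M' N)
  | appR {b M M' V} : IsValue V → Step b M M' → ¬ IsPar M → Step b (.app V M) (.app V M')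

/-- The two contracta of a single +-redex, reduced in context. -/
inductive PlusPair : Tm → Tm → Tm → Prop
  | base (M N) : PlusPair (.plus M N) M N
  | parL {M M₁ M₂} (N) : PlusPair M M₁ M₂ → PlusPair (.par M N) (.par M₁ N) (.par M₂ N)
  | parR {N N₁ N₂} (M) : PlusPair N N₁ N₂ → PlusPair (.par M N) (.par M N₁) (.par M N₂)
  | appL {M M₁ M₂} (N) : PlusPair M M₁ M₂ → ¬ IsPar M → PlusPair (.app M N) (.app M₁ N) (.app M₂ N)
  | appR {M M₁ M₂ V} : IsValue V → PlusPair M M₁ M₂ → ¬ IsPar M → PlusPair (.app V M) (.app V M₁) (.app V M₂)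

/-- n-step reduction. -/
inductive Steps : ℕ → Tm → Tm → Prop
  | refl (M) : Steps 0 M M
  | head {b M N P n} : Step b M N → Steps n N P → Steps (n+1) M P

/-- A closed term converges iff it reduces to a parallel composition of values. -/
def Converges (M : Tm) : Prop :=
  ∃ (n : ℕ) (V : Tm) (Vs : List Tm), IsValue V ∧ (∀ W ∈ Vs, IsValue W) ∧
    Steps n M (Vs.foldl Tm.par V)

/-- Typing derivations, indexed by the measure |π|. -/
inductive Deriv : Ctx → Tm → PTy → ℕ → Prop
  | ax (x : ℕ) (τ : CTy) : Deriv (Ctx.single x τ) (.var x) (.ofC τ) 0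
  | lamI (n : ℕ) (Δ : Fin n → Ctx) (τ : Fin n → CTy) (α : Fin n → PTy) (ms : Fin n → ℕ)
      (M : Tm) :
      (∀ i, Deriv (Ctx.cons (τ i) (Δ i)) M (α i) (ms i)) →
      Deriv (tensCtxFin n Δ) (.lam M)
        (.ofC (tensFin n (fun i => .arr (τ i) (α i)))) (∑ i, ms i)
  | appE (k : ℕ) (hk : 0 < k) (nf : Fin k → ℕ) (hn : ∀ i, 0 < nf i)
      (τ : ∀ i : Fin k, Fin (nf i) → CTy) (α : ∀ i : Fin k, Fin (nf i) → PTy)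
      (Δ : Ctx) (Γ : Fin k → Ctx) (m0 : ℕ) (ms : Fin k → ℕ) (M N : Tm) :
      Deriv Δ M (parFin k (fun i => .ofC (tensFin (nf i) (fun j => .arr (τ i j) (α i j))))) m0 →
      (∀ i, Deriv (Γ i) N (parFin (nf i) (fun j => .ofC (τ i j))) (ms i)) →
      Deriv (Ctx.tens Δ (tensCtxFin k Γ)) (.app M N)
        (parFin k (fun i => parFin (nf i) (α i)))
        ((m0 + (∑ i, ms i) + (∑ i, 2 * nf i)) - 1)
  | plusL {Δ M α m} (N) : Deriv Δ M α m → Deriv Δ (.plus M N) α (m+1)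
  | plusR {Δ N α m} (M) : Deriv Δ N α m → Deriv Δ (.plus M N) α (m+1)
  | parI {Δ Γ M N α β m m'} : Deriv Δ M α m → Deriv Γ N β m' →
      Deriv (Ctx.tens Δ Γ) (.par M N) (.par α β) (m + m')
  | eqv {Γ Γ' M α α' m} : Deriv Γ M α m → CtxEq Γ Γ' → PEq α α' → Deriv Γ' M α' m

def deltaTm : Tm := .lam (.app (.var 0) (.var 0))
def OmegaTm : Tm := .app deltaTm deltaTm
def Idt : Tm := .lam (.var 0)
def dstarTm : Tm := .lam (.lam (.app (.var 1) (.var 1)))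
def YstarTm : Tm := .app dstarTm dstarTm

/-!
Induction on the derivation of `M`, generalised to the substitution of an arbitrary de Bruijn
index `j`. The crux is that a derivation of a value can be cut along its type: a derivation of
`V : σ ⊗ ρ` splits into derivations of `V : σ` and `V : ρ` whose contexts tensor, and whose
measures add, to the original ones. For an abstraction, the premises of its `⊸I` rule are
distributed according to which arrow factor of `σ ⊗ ρ` they produce; these factors are matched
up to type equivalence through the multiset of their equivalence classes, which `CEq` preserves.
A value of type `1` has measure `0` and a trivial context. Hence every premise of a rule receives
its own share of the derivation of `V`, and an axiom for another variable receives a trivial one,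
so the measures add up. Under a binder `V` is shifted, which preserves derivations and measures
once a `1` is inserted into the context.
-/

@[simp] theorem tensList_cons (a : CTy) (l : List CTy) :
    tensList (a :: l) = .tens a (tensList l) := rfl

theorem tensFin_eq_tensList_map {n : ℕ} (f : Fin n → CTy) :
    tensFin n f = tensList ((List.finRange n).map f) := by
  rw [tensFin, List.ofFn_eq_map]

theorem tensFin_succ {n : ℕ} (f : Fin (n + 1) → CTy) :
    tensFin (n + 1) f = .tens (f 0) (tensFin n fun i => f i.succ) := by
  rw [tensFin, List.ofFn_succ]; rfl

theorem CEq.one_tens (τ : CTy) : CEq (.tens .one τ) τ := .trans (.comm _ _) (.unit _)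

theorem CEq.tens_tens_tens_comm (a b c d : CTy) :
    CEq (.tens (.tens a b) (.tens c d)) (.tens (.tens a c) (.tens b d)) :=
  .trans (.assoc _ _ _) <| .trans (.tensCongr (.refl a) <| .trans (.symm (.assoc _ _ _)) <|
    .trans (.tensCongr (.comm _ _) (.refl d)) (.assoc _ _ _)) (.symm (.assoc _ _ _))

theorem ceq_tensList_append : ∀ l₁ l₂ : List CTy,
    CEq (tensList (l₁ ++ l₂)) (.tens (tensList l₁) (tensList l₂))
  | [], _ => .symm (.one_tens _)
  | a :: l₁, l₂ => .trans (.tensCongr (.refl a) (ceq_tensList_append l₁ l₂)) (.symm (.assoc _ _ _))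

theorem List.Perm.ceq_tensList {l₁ l₂ : List CTy} (h : l₁.Perm l₂) :
    CEq (tensList l₁) (tensList l₂) := by
  induction h with
  | nil => exact .refl _
  | cons a _ ih => exact .tensCongr (.refl a) ih
  | swap a b l =>
    exact .trans (.symm (.assoc _ _ _)) (.trans (.tensCongr (.comm _ _) (.refl _)) (.assoc _ _ _))
  | trans _ _ ih₁ ih₂ => exact ih₁.trans ih₂

theorem List.Forall₂.ceq_tensList {l₁ l₂ : List CTy} (h : List.Forall₂ CEq l₁ l₂) :
    CEq (tensList l₁) (tensList l₂) := by
  induction h with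
  | nil => exact .refl _
  | cons h _ ih => exact .tensCongr h ih

theorem ceq_tensFin_tens {n : ℕ} (f g : Fin n → CTy) :
    CEq (tensFin n fun i => .tens (f i) (g i)) (.tens (tensFin n f) (tensFin n g)) := by
  induction n with
  | zero => exact .symm (.unit _)
  | succ n ih =>
    simp only [tensFin_succ]
    exact .trans (.tensCongr (.refl _) (ih _ _)) (.tens_tens_tens_comm _ _ _ _)

theorem ceq_tensFin_one (n : ℕ) : CEq (tensFin n fun _ => .one) .one := by
  induction n with
  | zero => exact .refl _
  | succ n ih => simpa only [tensFin_succ] using .trans (.tensCongr (.refl _) ih) (.unit _)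

theorem PEq.ofC_transport {α β : PTy} (h : PEq α β) :
    (∀ a, α = .ofC a → ∃ b, β = .ofC b ∧ CEq a b) ∧
      (∀ b, β = .ofC b → ∃ a, α = .ofC a ∧ CEq a b) :=
  PEq.rec (motive_1 := fun _ _ _ => True)
    (motive_2 := fun α β _ => (∀ a, α = .ofC a → ∃ b, β = .ofC b ∧ CEq a b) ∧
      (∀ b, β = .ofC b → ∃ a, α = .ofC a ∧ CEq a b))
    (fun _ => trivial) (fun _ _ => trivial) (fun _ _ _ _ => trivial) (fun _ _ => trivial)
    (fun _ _ _ => trivial) (fun _ => trivial) (fun _ _ _ _ => trivial) (fun _ _ _ _ => trivial)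
    (fun _ => ⟨fun a h => ⟨a, h, .refl a⟩, fun b h => ⟨b, h, .refl b⟩⟩)
    (fun _ ih => ⟨fun a h => (ih.2 a h).imp fun _ ⟨h, e⟩ => ⟨h, e.symm⟩,
      fun b h => (ih.1 b h).imp fun _ ⟨h, e⟩ => ⟨h, e.symm⟩⟩)
    (fun _ _ ih₁ ih₂ => ⟨fun a h => by
        obtain ⟨c, hc, e₁⟩ := ih₁.1 a h
        obtain ⟨b, hb, e₂⟩ := ih₂.1 c hc
        exact ⟨b, hb, e₁.trans e₂⟩,
      fun b h => by
        obtain ⟨c, hc, e₂⟩ := ih₂.2 b h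
        obtain ⟨a, ha, e₁⟩ := ih₁.2 c hc
        exact ⟨a, ha, e₁.trans e₂⟩⟩)
    (fun _ _ => ⟨fun _ h => (nomatch h), fun _ h => (nomatch h)⟩)
    (fun _ _ _ => ⟨fun _ h => (nomatch h), fun _ h => (nomatch h)⟩)
    (fun _ _ _ _ => ⟨fun _ h => (nomatch h), fun _ h => (nomatch h)⟩)
    (fun e _ => ⟨fun _ h => by cases h; exact ⟨_, rfl, e⟩,
      fun _ h => by cases h; exact ⟨_, rfl, e⟩⟩)
    h

theorem peq_ofC_iff {a b : CTy} : PEq (.ofC a) (.ofC b) ↔ CEq a b := by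
  refine ⟨fun h => ?_, .ofC⟩
  obtain ⟨_, ⟨⟩, hab⟩ := h.ofC_transport.1 a rfl
  exact hab

def CTy.arrows : CTy → List CTy
  | .one => []
  | .tens a b => a.arrows ++ b.arrows
  | .arr a b => [.arr a b]

theorem ceq_tensList_arrows : ∀ τ : CTy, CEq τ (tensList τ.arrows)
  | .one => .refl _
  | .tens a b => .trans (.tensCongr (ceq_tensList_arrows a) (ceq_tensList_arrows b))
      (.symm (ceq_tensList_append _ _))
  | .arr _ _ => .symm (.unit _)

def CTy.setoid : Setoid CTy := ⟨CEq, ⟨CEq.refl, .symm, .trans⟩⟩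

def CTy.arrowClasses (τ : CTy) : Multiset (Quotient CTy.setoid) :=
  τ.arrows.map (Quotient.mk CTy.setoid)

theorem CTy.arrowClasses_tens (a b : CTy) :
    (CTy.tens a b).arrowClasses = a.arrowClasses + b.arrowClasses := by
  simp [CTy.arrowClasses, CTy.arrows]

theorem CEq.arrowClasses_eq {τ ρ : CTy} (h : CEq τ ρ) : τ.arrowClasses = ρ.arrowClasses :=
  CEq.rec (motive_1 := fun τ ρ _ => τ.arrowClasses = ρ.arrowClasses)
    (motive_2 := fun _ _ _ => True)
    (fun _ => rfl) (fun _ ih => ih.symm) (fun _ _ ih₁ ih₂ => ih₁.trans ih₂)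
    (fun _ _ => by simp only [CTy.arrowClasses_tens, add_comm])
    (fun _ _ _ => by simp only [CTy.arrowClasses_tens, add_assoc])
    (fun _ => by simp [CTy.arrowClasses, CTy.arrows])
    (fun _ _ ih₁ ih₂ => by simp only [CTy.arrowClasses_tens, ih₁, ih₂])
    (fun h₁ h₂ _ _ => by
      simpa [CTy.arrowClasses, CTy.arrows] using Quotient.sound (s := CTy.setoid) (.arrCongr h₁ h₂))
    (fun _ => trivial) (fun _ _ => trivial) (fun _ _ _ _ => trivial) (fun _ _ => trivial)
    (fun _ _ _ => trivial) (fun _ _ _ _ => trivial) (fun _ _ => trivial) h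

theorem forall₂_ceq_of_map_mk_eq {l l' : List CTy}
    (h : l.map (Quotient.mk CTy.setoid) = l'.map (Quotient.mk CTy.setoid)) :
    List.Forall₂ CEq l l' := by
  rw [← List.forall₂_eq_eq_eq, List.forall₂_map_left_iff, List.forall₂_map_right_iff] at h
  exact h.imp fun _ _ => Quotient.exact

section ArrowFamily

variable {ι : Type} {F : ι → CTy}

theorem arrows_tensList_map (hF : ∀ i, (F i).arrows = [F i]) (L : List ι) :
    (tensList (L.map F)).arrows = L.map F := by
  induction L with
  | nil => rfl
  | cons i L ih => simp [CTy.arrows, hF, ih]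

theorem eq_nil_of_ceq_tensList_map_one (hF : ∀ i, (F i).arrows = [F i]) {L : List ι}
    (h : CEq (tensList (L.map F)) .one) : L = [] := by
  simpa [CTy.arrowClasses, arrows_tensList_map hF, CTy.arrows] using h.arrowClasses_eq

theorem exists_perm_split_of_ceq_tens (hF : ∀ i, (F i).arrows = [F i]) {L : List ι} {σ ρ : CTy}
    (h : CEq (tensList (L.map F)) (.tens σ ρ)) :
    ∃ L₁ L₂, L.Perm (L₁ ++ L₂) ∧ CEq (tensList (L₁.map F)) σ ∧ CEq (tensList (L₂.map F)) ρ := by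
  have hcl : ((σ.arrows ++ ρ.arrows).map (Quotient.mk CTy.setoid)).Perm
      (L.map (Quotient.mk CTy.setoid ∘ F)) := by
    have := h.arrowClasses_eq
    simp only [CTy.arrowClasses, arrows_tensList_map hF, CTy.arrows, Multiset.coe_eq_coe] at this
    simpa using this.symm
  obtain ⟨L', hL', hperm⟩ := (congrFun₂ (List.eq_map_comp_perm _) _ _).mpr hcl
  have hσ := congrArg (List.take σ.arrows.length) hL'
  have hρ := congrArg (List.drop σ.arrows.length) hL'
  simp only [List.map_append, List.length_map, List.take_left', List.drop_left', ← List.map_map,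
    ← List.map_take, ← List.map_drop] at hσ hρ
  refine ⟨_, _, by rw [List.take_append_drop σ.arrows.length L']; exact hperm.symm, ?_, ?_⟩
  · exact (forall₂_ceq_of_map_mk_eq hσ.symm).ceq_tensList.trans (ceq_tensList_arrows σ).symm
  · exact (forall₂_ceq_of_map_mk_eq hρ.symm).ceq_tensList.trans (ceq_tensList_arrows ρ).symm

end ArrowFamily

theorem CtxEq.refl (Γ : Ctx) : CtxEq Γ Γ := fun _ => .refl _

theorem CtxEq.symm {Γ Δ : Ctx} (h : CtxEq Γ Δ) : CtxEq Δ Γ := fun n => (h n).symm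

theorem CtxEq.trans {Γ Δ Θ : Ctx} (h₁ : CtxEq Γ Δ) (h₂ : CtxEq Δ Θ) : CtxEq Γ Θ :=
  fun n => (h₁ n).trans (h₂ n)

theorem CtxEq.tens {Γ Γ' Δ Δ' : Ctx} (h₁ : CtxEq Γ Γ') (h₂ : CtxEq Δ Δ') :
    CtxEq (Γ.tens Δ) (Γ'.tens Δ') := fun n => .tensCongr (h₁ n) (h₂ n)

theorem ctxEq_tens_empty (Γ : Ctx) : CtxEq (Γ.tens Ctx.empty) Γ := fun _ => .unit _

theorem ctxEq_empty_tens (Γ : Ctx) : CtxEq (Ctx.empty.tens Γ) Γ := fun _ => .one_tens _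

theorem ctxEq_tens_tens_tens_comm (Γ₁ Γ₂ Γ₃ Γ₄ : Ctx) :
    CtxEq ((Γ₁.tens Γ₂).tens (Γ₃.tens Γ₄)) ((Γ₁.tens Γ₃).tens (Γ₂.tens Γ₄)) :=
  fun _ => .tens_tens_tens_comm _ _ _ _

theorem ctxEq_tensCtxFin_tens {n : ℕ} (Δ Γ : Fin n → Ctx) :
    CtxEq (tensCtxFin n fun i => (Δ i).tens (Γ i)) ((tensCtxFin n Δ).tens (tensCtxFin n Γ)) :=
  fun _ => ceq_tensFin_tens _ _

theorem tensCtxFin_cons {n : ℕ} (Γ₀ : Ctx) (Γ : Fin n → Ctx) :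
    tensCtxFin (n + 1) (Fin.cons Γ₀ Γ) = Γ₀.tens (tensCtxFin n Γ) := by
  funext x
  simp [tensCtxFin, tensFin_succ, Ctx.tens]

theorem ctxEq_cons_tens_cons_one (τ : CTy) (Δ Γ : Ctx) :
    CtxEq ((Ctx.cons τ Δ).tens (Ctx.cons .one Γ)) (Ctx.cons τ (Δ.tens Γ))
  | 0 => .unit _
  | _ + 1 => .refl _

namespace Ctx

def removeAt (j : ℕ) (Γ : Ctx) : Ctx := fun n => Γ (if n < j then n else n + 1)

theorem removeAt_succ_cons (j : ℕ) (τ : CTy) (Γ : Ctx) :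
    (Ctx.cons τ Γ).removeAt (j + 1) = Ctx.cons τ (Γ.removeAt j) := by
  funext n
  rcases n with _ | n <;> simp only [removeAt, Ctx.cons] <;> split_ifs <;> first | rfl | omega

theorem removeAt_single_self (j : ℕ) (τ : CTy) : (Ctx.single j τ).removeAt j = Ctx.empty := by
  funext n
  simp only [removeAt, single, empty]
  split_ifs <;> first | rfl | omega

theorem removeAt_single_of_ne {x j : ℕ} (h : x ≠ j) (τ : CTy) :
    (Ctx.single x τ).removeAt j = Ctx.single (if j < x then x - 1 else x) τ := by
  funext n
  simp only [removeAt, single]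
  split_ifs <;> first | rfl | omega

def insertAt (c : ℕ) (ρ : CTy) (Γ : Ctx) : Ctx := fun n =>
  if n < c then Γ n else if n = c then ρ else Γ (n - 1)

theorem insertAt_zero (ρ : CTy) (Γ : Ctx) : Γ.insertAt 0 ρ = Ctx.cons ρ Γ := by
  funext n
  cases n <;> simp [insertAt, Ctx.cons]

theorem insertAt_succ_cons (c : ℕ) (ρ τ : CTy) (Γ : Ctx) :
    (Ctx.cons τ Γ).insertAt (c + 1) ρ = Ctx.cons τ (Γ.insertAt c ρ) := by
  funext n
  rcases n with _ | _ | n <;> simp only [insertAt, Ctx.cons] <;> split_ifs <;> first | rfl | omega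

theorem insertAt_single (c x : ℕ) (τ : CTy) :
    (Ctx.single x τ).insertAt c .one = Ctx.single (if x < c then x else x + 1) τ := by
  funext n
  simp only [insertAt, single]
  split_ifs <;> first | rfl | omega

end Ctx

theorem CtxEq.removeAt {Γ Γ' : Ctx} (h : CtxEq Γ Γ') (j : ℕ) :
    CtxEq (Γ.removeAt j) (Γ'.removeAt j) := fun _ => h _

theorem CtxEq.insertAt {Γ Γ' : Ctx} (h : CtxEq Γ Γ') (c : ℕ) (ρ : CTy) :
    CtxEq (Γ.insertAt c ρ) (Γ'.insertAt c ρ) := by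
  intro n
  simp only [Ctx.insertAt]
  split_ifs
  exacts [h n, .refl ρ, h (n - 1)]

theorem ctxEq_tens_insertAt_one (c : ℕ) (Δ Γ : Ctx) :
    CtxEq ((Δ.insertAt c .one).tens (Γ.insertAt c .one)) ((Δ.tens Γ).insertAt c .one) := by
  intro n
  simp only [Ctx.insertAt, Ctx.tens]
  split_ifs
  exacts [.refl _, .unit _, .refl _]

theorem ctxEq_tensCtxFin_insertAt_one (c n : ℕ) (Δ : Fin n → Ctx) :
    CtxEq (tensCtxFin n fun i => (Δ i).insertAt c .one) ((tensCtxFin n Δ).insertAt c .one) := by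
  intro x
  simp only [Ctx.insertAt, tensCtxFin]
  split_ifs
  exacts [.refl _, ceq_tensFin_one n, .refl _]

theorem Deriv.var_inv {Γ : Ctx} {x : ℕ} {α : PTy} {m : ℕ} (h : Deriv Γ (.var x) α m) :
    m = 0 ∧ ∃ τ, CtxEq Γ (Ctx.single x τ) ∧ PEq (.ofC τ) α := by
  generalize hM : Tm.var x = M at h
  induction h with
  | ax => cases hM; exact ⟨rfl, _, .refl _, .refl _⟩
  | eqv _ hΓ hα ih =>
    obtain ⟨hm, τ, hΓ', hα'⟩ := ih hM
    exact ⟨hm, τ, hΓ.symm.trans hΓ', hα'.trans hα⟩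
  | _ => cases hM

theorem Deriv.lam_inv {Γ : Ctx} {M : Tm} {α : PTy} {m : ℕ} (h : Deriv Γ (.lam M) α m) :
    ∃ (n : ℕ) (Δ : Fin n → Ctx) (τ : Fin n → CTy) (β : Fin n → PTy) (ms : Fin n → ℕ),
      (∀ i, Deriv (Ctx.cons (τ i) (Δ i)) M (β i) (ms i)) ∧ CtxEq Γ (tensCtxFin n Δ) ∧
      PEq (.ofC (tensFin n fun i => .arr (τ i) (β i))) α ∧ m = ∑ i, ms i := by
  generalize hM : Tm.lam M = N at h
  induction h with
  | lamI n Δ τ β ms => cases hM; exact ⟨n, Δ, τ, β, ms, ‹_›, .refl _, .refl _, rfl⟩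
  | eqv _ hΓ hα ih =>
    obtain ⟨n, Δ, τ, β, ms, prem, hΓ', hα', hm⟩ := ih hM
    exact ⟨n, Δ, τ, β, ms, prem, hΓ.symm.trans hΓ', hα'.trans hα, hm⟩
  | _ => cases hM

theorem Deriv.lam_of_list {ι : Type} {Δ : ι → Ctx} {τ : ι → CTy} {β : ι → PTy} {ms : ι → ℕ}
    {M : Tm} (prem : ∀ i, Deriv (Ctx.cons (τ i) (Δ i)) M (β i) (ms i)) (L : List ι) :
    Deriv (fun x => tensList (L.map (Δ · x))) (.lam M)
      (.ofC (tensList (L.map fun i => .arr (τ i) (β i)))) (L.map ms).sum := by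
  have h := Deriv.lamI L.length (fun k => Δ L[k.1]) (fun k => τ L[k.1]) (fun k => β L[k.1])
    (fun k => ms L[k.1]) M (fun k => prem _)
  have hΓ : tensCtxFin L.length (fun k => Δ L[k.1]) = fun x => tensList (L.map (Δ · x)) :=
    funext fun x => congrArg tensList (List.ofFn_getElem_eq_map L (Δ · x))
  have hτ := congrArg tensList (List.ofFn_getElem_eq_map L fun i => CTy.arr (τ i) (β i))
  rwa [hΓ, tensFin, hτ, Fin.sum_univ_fun_getElem] at h

theorem Deriv.value_one {Γ : Ctx} {V : Tm} {m : ℕ} (hV : IsValue V)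
    (h : Deriv Γ V (.ofC .one) m) : m = 0 ∧ CtxEq Γ Ctx.empty := by
  cases V with
  | var x =>
    obtain ⟨hm, τ, hΓ, hτ⟩ := h.var_inv
    refine ⟨hm, hΓ.trans fun n => ?_⟩
    simp only [Ctx.single, Ctx.empty]
    split_ifs
    exacts [peq_ofC_iff.1 hτ, .refl _]
  | lam M =>
    obtain ⟨n, Δ, τ, β, ms, -, hΓ, hty, rfl⟩ := h.lam_inv
    rw [tensFin_eq_tensList_map] at hty
    obtain rfl : n = 0 := by
      simpa using eq_nil_of_ceq_tensList_map_one (fun _ => rfl) (peq_ofC_iff.1 hty)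
    exact ⟨by simp, hΓ⟩
  | _ => cases hV

theorem Deriv.value_split_tens {Γ : Ctx} {V : Tm} {σ ρ : CTy} {m : ℕ} (hV : IsValue V)
    (h : Deriv Γ V (.ofC (.tens σ ρ)) m) :
    ∃ Γ₁ Γ₂ m₁ m₂, m = m₁ + m₂ ∧ Deriv Γ₁ V (.ofC σ) m₁ ∧ Deriv Γ₂ V (.ofC ρ) m₂ ∧
      CtxEq Γ (Γ₁.tens Γ₂) := by
  cases V with
  | var x =>
    obtain ⟨rfl, τ, hΓ, hτ⟩ := h.var_inv
    refine ⟨_, _, 0, 0, rfl, .ax x σ, .ax x ρ, hΓ.trans fun n => ?_⟩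
    simp only [Ctx.single, Ctx.tens]
    split_ifs
    exacts [peq_ofC_iff.1 hτ, (CEq.unit _).symm]
  | lam M =>
    obtain ⟨n, Δ, τ, β, ms, prem, hΓ, hty, rfl⟩ := h.lam_inv
    rw [tensFin_eq_tensList_map] at hty
    obtain ⟨L₁, L₂, hperm, h₁, h₂⟩ :=
      exists_perm_split_of_ceq_tens (fun _ => rfl) (peq_ofC_iff.1 hty)
    refine ⟨_, _, _, _, ?_, (Deriv.lam_of_list prem L₁).eqv (.refl _) (.ofC h₁),
      (Deriv.lam_of_list prem L₂).eqv (.refl _) (.ofC h₂), hΓ.trans fun x => ?_⟩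
    · rw [← List.sum_ofFn, List.ofFn_eq_map, (hperm.map ms).sum_eq, List.map_append,
        List.sum_append]
    · show CEq (tensFin n fun i => Δ i x) _
      rw [tensFin_eq_tensList_map]
      refine (hperm.map _).ceq_tensList.trans ?_
      rw [List.map_append]
      exact ceq_tensList_append _ _
  | _ => cases hV

theorem Deriv.value_split_tensFin {V : Tm} (hV : IsValue V) {n : ℕ} {f : Fin n → CTy} {Γ : Ctx}
    {m : ℕ} (h : Deriv Γ V (.ofC (tensFin n f)) m) :
    ∃ (Γs : Fin n → Ctx) (ms : Fin n → ℕ), m = ∑ i, ms i ∧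
      (∀ i, Deriv (Γs i) V (.ofC (f i)) (ms i)) ∧ CtxEq Γ (tensCtxFin n Γs) := by
  induction n generalizing Γ m with
  | zero =>
    obtain ⟨rfl, hΓ⟩ := Deriv.value_one hV h
    exact ⟨Fin.elim0, Fin.elim0, rfl, fun i => i.elim0, hΓ⟩
  | succ n ih =>
    rw [tensFin_succ] at h
    obtain ⟨Γ₀, Γ', m₀, m', rfl, h₀, h', hΓ⟩ := h.value_split_tens hV
    obtain ⟨Γs, ms, rfl, hs, hΓ'⟩ := ih h'
    refine ⟨Fin.cons Γ₀ Γs, Fin.cons m₀ ms, (Fin.sum_cons _ _).symm, Fin.cases h₀ hs, ?_⟩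
    rw [tensCtxFin_cons]
    exact hΓ.trans (.tens (.refl _) hΓ')

theorem IsValue.shift {V : Tm} (hV : IsValue V) (c : ℕ) : IsValue (shiftTm c V) := by
  cases V with
  | var n => simp only [shiftTm]; split_ifs <;> trivial
  | lam M => trivial
  | _ => cases hV

theorem Deriv.shift {Γ : Ctx} {M : Tm} {α : PTy} {m : ℕ} (h : Deriv Γ M α m) (c : ℕ) :
    Deriv (Γ.insertAt c .one) (shiftTm c M) α m := by
  induction h generalizing c with
  | ax x τ =>
    have hx : shiftTm c (.var x) = .var (if x < c then x else x + 1) := by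
      simp only [shiftTm]; split_ifs <;> rfl
    rw [hx, Ctx.insertAt_single]
    exact .ax _ τ
  | lamI n Δ τ α ms M _ ih =>
    refine (Deriv.lamI n _ τ α ms _ fun i => ?_).eqv
      (ctxEq_tensCtxFin_insertAt_one c n Δ) (.refl _)
    simpa only [Ctx.insertAt_succ_cons] using ih i (c + 1)
  | appE k hk nf hn τ α Δ Γ m₀ ms M N _ _ ihM ihN =>
    exact (Deriv.appE k hk nf hn τ α _ _ m₀ ms _ _ (ihM c) fun i => ihN i c).eqv
      (((CtxEq.refl _).tens (ctxEq_tensCtxFin_insertAt_one c k Γ)).trans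
        (ctxEq_tens_insertAt_one c Δ _)) (.refl _)
  | plusL N _ ih => exact (ih c).plusL _
  | plusR M _ ih => exact (ih c).plusR _
  | parI _ _ ih₁ ih₂ => exact ((ih₁ c).parI (ih₂ c)).eqv (ctxEq_tens_insertAt_one c _ _) (.refl _)
  | eqv _ hΓ hα ih => exact (ih c).eqv (hΓ.insertAt c .one) hα

theorem Deriv.subst_var {x j : ℕ} {τ : CTy} {Γ : Ctx} {V : Tm} {m₂ : ℕ} (hV : IsValue V)
    (h₂ : Deriv Γ V (.ofC (Ctx.single x τ j)) m₂) :
    Deriv (((Ctx.single x τ).removeAt j).tens Γ) (substTm (.var x) j V) (.ofC τ) (0 + m₂) := by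
  by_cases hx : x = j
  · subst hx
    rw [show substTm (.var x) x V = V by simp [substTm], Ctx.removeAt_single_self, zero_add]
    rw [show Ctx.single x τ x = τ from if_pos rfl] at h₂
    exact h₂.eqv (ctxEq_empty_tens Γ).symm (.refl _)
  · have hsub : substTm (.var x) j V = .var (if j < x then x - 1 else x) := by
      simp only [substTm, if_neg hx]; split_ifs <;> rfl
    rw [show Ctx.single x τ j = .one from if_neg (Ne.symm hx)] at h₂
    obtain ⟨rfl, hΓ⟩ := Deriv.value_one hV h₂
    rw [hsub, Ctx.removeAt_single_of_ne hx]
    exact (Deriv.ax _ τ).eqv ((ctxEq_tens_empty _).symm.trans ((CtxEq.refl _).tens hΓ.symm))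
      (.refl _)

theorem Deriv.subst {Θ : Ctx} {M : Tm} {α : PTy} {m₁ : ℕ} (h₁ : Deriv Θ M α m₁) {j : ℕ}
    {Γ : Ctx} {V : Tm} {m₂ : ℕ} (hV : IsValue V) (h₂ : Deriv Γ V (.ofC (Θ j)) m₂) :
    Deriv ((Θ.removeAt j).tens Γ) (substTm M j V) α (m₁ + m₂) := by
  induction h₁ generalizing j Γ V m₂ with
  | ax x τ => exact Deriv.subst_var hV h₂
  | lamI n Δ τ α ms M _ ih =>
    obtain ⟨Γs, ms₂, rfl, hVs, hΓ⟩ := Deriv.value_split_tensFin hV (f := fun i => Δ i j) h₂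
    have prem : ∀ i, Deriv (Ctx.cons (τ i) (((Δ i).removeAt j).tens (Γs i)))
        (substTm M (j + 1) (shiftTm 0 V)) (α i) (ms i + ms₂ i) := by
      intro i
      have hVi := (hVs i).shift 0
      rw [Ctx.insertAt_zero] at hVi
      have := ih i (j := j + 1) (hV.shift 0) hVi
      rw [Ctx.removeAt_succ_cons] at this
      exact this.eqv (ctxEq_cons_tens_cons_one _ _ _) (.refl _)
    have := Deriv.lamI n _ τ α _ _ prem
    rw [Finset.sum_add_distrib] at this
    exact this.eqv ((ctxEq_tensCtxFin_tens _ _).trans ((CtxEq.refl _).tens hΓ.symm)) (.refl _)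
  | appE k hk nf hn τ α Δ Γf m₀ ms M N _ _ ihM ihN =>
    obtain ⟨Γ₀, Γ', a, b, rfl, hV₀, hV', hΓ⟩ :=
      Deriv.value_split_tens hV (σ := Δ j) (ρ := tensFin k fun i => Γf i j) h₂
    obtain ⟨Γs, bs, rfl, hVs, hΓ'⟩ := Deriv.value_split_tensFin hV hV'
    have := Deriv.appE k hk nf hn τ α _ _ (m₀ + a) (fun i => ms i + bs i) _ _ (ihM hV hV₀)
      fun i => ihN i hV (hVs i)
    -- The rule's `- 1` is truncated subtraction; it commutes with `+ m₂` as this sum is positive.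
    have hpos : 0 < ∑ i, 2 * nf i :=
      Finset.sum_pos (fun i _ => by have := hn i; omega) ⟨⟨0, hk⟩, Finset.mem_univ _⟩
    rw [show m₀ + a + ∑ i, (ms i + bs i) + ∑ i, 2 * nf i - 1
        = (m₀ + ∑ i, ms i + ∑ i, 2 * nf i - 1) + (a + ∑ i, bs i) by
      rw [Finset.sum_add_distrib]; omega] at this
    exact this.eqv (((CtxEq.refl _).tens (ctxEq_tensCtxFin_tens _ _)).trans <|
      (ctxEq_tens_tens_tens_comm _ _ _ _).trans <|
        (CtxEq.refl _).tens (hΓ.trans ((CtxEq.refl _).tens hΓ')).symm) (.refl _)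
  | plusL N _ ih => rw [Nat.add_right_comm]; exact (ih hV h₂).plusL _
  | plusR M _ ih => rw [Nat.add_right_comm]; exact (ih hV h₂).plusR _
  | parI _ _ ih₁ ih₂ =>
    obtain ⟨Γ₁, Γ₂, a, b, rfl, hV₁, hV₂, hΓ⟩ := Deriv.value_split_tens hV h₂
    have := (ih₁ hV hV₁).parI (ih₂ hV hV₂)
    rw [add_add_add_comm] at this
    exact this.eqv ((ctxEq_tens_tens_tens_comm _ _ _ _).trans ((CtxEq.refl _).tens hΓ.symm))
      (.refl _)
  | eqv _ hΘ hα ih =>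
    exact (ih hV (h₂.eqv (.refl _) (.ofC (hΘ j).symm))).eqv ((hΘ.removeAt j).tens (.refl _)) hα

theorem substitution_lemma (Δ Γ : Ctx) (τ : CTy) (M V : Tm) (α : PTy) (m₁ m₂ : ℕ)
    (hV : IsValue V)
    (h₁ : Deriv (Ctx.cons τ Δ) M α m₁) (h₂ : Deriv Γ V (.ofC τ) m₂) :
    Deriv (Ctx.tens Δ Γ) (substTm M 0 V) α (m₁ + m₂) :=
  -- `(Ctx.cons τ Δ).removeAt 0` and `Ctx.cons τ Δ 0` reduce to `Δ` and `τ`.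
  h₁.subst (j := 0) hV h₂
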